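/- arXiv:1501.00707 — 3 statements merged into one kernel-verified Lean document; each statement's English description precedes it below -/
import Mathlib

section
/- Let 𝔞: ℚ_p^N → ℝ_{≥0} be a continuous symbol with 𝔞(ξ) ≥ C > 0 everywhere and C₀‖ξ‖_p^α ≤ 𝔞(ξ) ≤ C₁‖ξ‖_p^α for ‖ξ‖_p ≥ p^{m₀}. Then the pseudodifferential operator A g = F⁻¹(𝔞 · F g) maps ℋ(l+1) continuously into ℋ(l) for every l ∈ ℕ, i.e. there is C₂ > 0 with ‖Ag‖_l ≤ C₂ ‖g‖_{l+1}. -/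
open MeasureTheory Filter
open scoped ENNReal NNReal

noncomputable section

def FT {p N : ℕ} [Fact p.Prime] [MeasurableSpace (Fin N → ℚ_[p])]
    (μ : Measure (Fin N → ℚ_[p]))
    (B : (Fin N → ℚ_[p]) →ₗ[ℚ_[p]] (Fin N → ℚ_[p]) →ₗ[ℚ_[p]] ℚ_[p])
    (χ : AddChar ℚ_[p] ℂ) (f : (Fin N → ℚ_[p]) → ℂ) : (Fin N → ℚ_[p]) → ℂ :=
  fun ξ => ∫ x, f x * χ (B x ξ) ∂μ

def sobolevNormSq {p N : ℕ} [Fact p.Prime] [MeasurableSpace (Fin N → ℚ_[p])]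
    (μ : Measure (Fin N → ℚ_[p])) (α : ℝ) (l : ℤ)
    (h : (Fin N → ℚ_[p]) → ℂ) : ℝ≥0∞ :=
  ∫⁻ ξ, ENNReal.ofReal ((max 1 ‖ξ‖) ^ (2 * α * (l : ℝ))) * (‖h ξ‖₊ : ℝ≥0∞) ^ 2 ∂μ

def sobolevNorm {p N : ℕ} [Fact p.Prime] [MeasurableSpace (Fin N → ℚ_[p])]
    (μ : Measure (Fin N → ℚ_[p])) (α : ℝ) (l : ℤ)
    (h : (Fin N → ℚ_[p]) → ℂ) : ℝ≥0∞ :=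
  (sobolevNormSq μ α l h) ^ (1 / 2 : ℝ)

def IsBruhatSchwartz {p N : ℕ} [Fact p.Prime] (f : (Fin N → ℚ_[p]) → ℂ) : Prop :=
  (∀ x : Fin N → ℚ_[p], ∃ l : ℤ, ∀ y : Fin N → ℚ_[p], ‖y‖ ≤ (p : ℝ) ^ l → f (x + y) = f x) ∧
    HasCompactSupport f

/-- A sequence is Cauchy in the Sobolev norm `‖·‖_l`. -/
def SobolevCauchy {p N : ℕ} [Fact p.Prime] [MeasurableSpace (Fin N → ℚ_[p])]
    (μ : Measure (Fin N → ℚ_[p])) (α : ℝ) (l : ℤ)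
    (F : ℕ → (Fin N → ℚ_[p]) → ℂ) : Prop :=
  ∀ ε : ℝ≥0∞, 0 < ε → ∃ K : ℕ, ∀ j k : ℕ, K ≤ j → K ≤ k →
    sobolevNorm μ α l (F j - F k) < ε

/-- `g` belongs to the Sobolev space `ℋ(l)`, the completion of the Bruhat–Schwartz
space with respect to `‖·‖_l`, viewed inside `L²`. -/
def MemSobolev {p N : ℕ} [Fact p.Prime] [MeasurableSpace (Fin N → ℚ_[p])]
    (μ : Measure (Fin N → ℚ_[p]))
    (B : (Fin N → ℚ_[p]) →ₗ[ℚ_[p]] (Fin N → ℚ_[p]) →ₗ[ℚ_[p]] ℚ_[p])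
    (χ : AddChar ℚ_[p] ℂ) (α : ℝ) (l : ℤ) (g : (Fin N → ℚ_[p]) → ℂ) : Prop :=
  MemLp g 2 μ ∧ ∃ F : ℕ → (Fin N → ℚ_[p]) → ℂ,
    (∀ n, IsBruhatSchwartz (F n)) ∧
    Tendsto (fun n => eLpNorm (F n - g) 2 μ) atTop (nhds 0) ∧
    SobolevCauchy μ α l (fun n => FT μ B χ (F n))

/-- `h` is the (distributional) Fourier transform of `g`:
`⟨h, φ⟩ = ⟨g, Fφ⟩` for every test function `φ`. -/
def IsFTOf {p N : ℕ} [Fact p.Prime] [MeasurableSpace (Fin N → ℚ_[p])]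
    (μ : Measure (Fin N → ℚ_[p]))
    (B : (Fin N → ℚ_[p]) →ₗ[ℚ_[p]] (Fin N → ℚ_[p]) →ₗ[ℚ_[p]] ℚ_[p])
    (χ : AddChar ℚ_[p] ℂ) (g h : (Fin N → ℚ_[p]) → ℂ) : Prop :=
  ∀ φ : (Fin N → ℚ_[p]) → ℂ, IsBruhatSchwartz φ →
    ∫ x, h x * φ x ∂μ = ∫ x, g x * FT μ B χ φ x ∂μ


/-! On the Fourier side the operator `A` is multiplication by its symbol, so its continuity
`ℋ(l+1) → ℋ(l)` only needs the growth bound `𝔞(ξ) ≤ K max(1, ‖ξ‖)^α`: multiplying by `𝔞`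
costs at most one extra factor `max(1, ‖ξ‖)^{2α}` of the Sobolev weight. The bound holds for
large `ξ` by hypothesis and on the remaining ball because `𝔞` is continuous. -/

theorem exists_le_mul_max_one_rpow {E : Type*} [SeminormedAddCommGroup E] [ProperSpace E]
    {a : E → ℝ} (ha : Continuous a) {α R c : ℝ} (hα : 0 ≤ α)
    (h : ∀ ξ, R ≤ ‖ξ‖ → a ξ ≤ c * ‖ξ‖ ^ α) :
    ∃ K : ℝ≥0, ∀ ξ, a ξ ≤ K * max 1 ‖ξ‖ ^ α := by
  obtain ⟨M, hM⟩ := (isCompact_closedBall (0 : E) R).exists_bound_of_continuousOn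
    ha.continuousOn
  refine ⟨(max c M).toNNReal, fun ξ => ?_⟩
  have hcK : max c M ≤ (max c M).toNNReal := Real.le_coe_toNNReal _
  by_cases hξ : R ≤ ‖ξ‖
  · calc a ξ ≤ c * ‖ξ‖ ^ α := h ξ hξ
      _ ≤ (max c M).toNNReal * ‖ξ‖ ^ α := by gcongr; exact (le_max_left _ _).trans hcK
      _ ≤ (max c M).toNNReal * max 1 ‖ξ‖ ^ α := by gcongr; exact le_max_right _ _
  · calc a ξ ≤ M := (le_abs_self _).trans (hM ξ (by simpa using (not_le.1 hξ).le))
      _ ≤ (max c M).toNNReal := (le_max_right _ _).trans hcK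
      _ ≤ (max c M).toNNReal * max 1 ‖ξ‖ ^ α :=
        le_mul_of_one_le_right (by positivity) (Real.one_le_rpow (le_max_left _ _) hα)

theorem sobolevNormSq_mul_le {p N : ℕ} [Fact p.Prime] [MeasurableSpace (Fin N → ℚ_[p])]
    (μ : Measure (Fin N → ℚ_[p])) (α : ℝ) (l : ℤ) {m : (Fin N → ℚ_[p]) → ℂ} {K : ℝ≥0}
    (hm : ∀ ξ, ‖m ξ‖ ≤ K * max 1 ‖ξ‖ ^ α) (h : (Fin N → ℚ_[p]) → ℂ) :
    sobolevNormSq μ α l (fun ξ => m ξ * h ξ) ≤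
      (K : ℝ≥0∞) ^ 2 * sobolevNormSq μ α (l + 1) h := by
  unfold sobolevNormSq
  rw [← lintegral_const_mul' _ _ (by simp)]
  refine lintegral_mono fun ξ => ?_
  have hw : 0 < max 1 ‖ξ‖ := lt_max_of_lt_left one_pos
  have hm_enorm : (‖m ξ‖₊ : ℝ≥0∞) ≤ K * ENNReal.ofReal (max 1 ‖ξ‖ ^ α) := by
    have := ENNReal.ofReal_le_ofReal (hm ξ)
    rwa [ENNReal.ofReal_mul K.coe_nonneg, ofReal_norm, ENNReal.ofReal_coe_nnreal] at this
  have hweight : ENNReal.ofReal (max 1 ‖ξ‖ ^ (2 * α * ((l + 1 : ℤ) : ℝ))) =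
      ENNReal.ofReal (max 1 ‖ξ‖ ^ (2 * α * (l : ℝ))) * ENNReal.ofReal (max 1 ‖ξ‖ ^ α) ^ 2 := by
    rw [← ENNReal.ofReal_pow (by positivity), ← ENNReal.ofReal_mul (by positivity),
      ← Real.rpow_natCast, ← Real.rpow_mul hw.le, ← Real.rpow_add hw]
    push_cast
    ring_nf
  calc ENNReal.ofReal (max 1 ‖ξ‖ ^ (2 * α * (l : ℝ))) * (‖m ξ * h ξ‖₊ : ℝ≥0∞) ^ 2
      = ENNReal.ofReal (max 1 ‖ξ‖ ^ (2 * α * (l : ℝ))) *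
          ((‖m ξ‖₊ : ℝ≥0∞) ^ 2 * ‖h ξ‖₊ ^ 2) := by
        rw [nnnorm_mul, ENNReal.coe_mul, mul_pow]
    _ ≤ ENNReal.ofReal (max 1 ‖ξ‖ ^ (2 * α * (l : ℝ))) *
          ((K * ENNReal.ofReal (max 1 ‖ξ‖ ^ α)) ^ 2 * ‖h ξ‖₊ ^ 2) := by gcongr
    _ = _ := by rw [hweight]; ring

theorem sobolevNorm_mul_le {p N : ℕ} [Fact p.Prime] [MeasurableSpace (Fin N → ℚ_[p])]
    (μ : Measure (Fin N → ℚ_[p])) (α : ℝ) (l : ℤ) {m : (Fin N → ℚ_[p]) → ℂ} {K : ℝ≥0}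
    (hm : ∀ ξ, ‖m ξ‖ ≤ K * max 1 ‖ξ‖ ^ α) (h : (Fin N → ℚ_[p]) → ℂ) :
    sobolevNorm μ α l (fun ξ => m ξ * h ξ) ≤ K * sobolevNorm μ α (l + 1) h := by
  unfold sobolevNorm
  calc sobolevNormSq μ α l (fun ξ => m ξ * h ξ) ^ (1 / 2 : ℝ)
      ≤ ((K : ℝ≥0∞) ^ 2 * sobolevNormSq μ α (l + 1) h) ^ (1 / 2 : ℝ) :=
        ENNReal.rpow_le_rpow (sobolevNormSq_mul_le μ α l hm h) (by norm_num)
    _ = K * sobolevNormSq μ α (l + 1) h ^ (1 / 2 : ℝ) := by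
        rw [ENNReal.mul_rpow_of_nonneg _ _ (by norm_num), ← ENNReal.rpow_natCast,
          ← ENNReal.rpow_mul]
        norm_num

theorem stmt3_general {p N : ℕ} [Fact p.Prime] [MeasurableSpace (Fin N → ℚ_[p])]
    (μ : Measure (Fin N → ℚ_[p]))
    (B : (Fin N → ℚ_[p]) →ₗ[ℚ_[p]] (Fin N → ℚ_[p]) →ₗ[ℚ_[p]] ℚ_[p])
    (χ : AddChar ℚ_[p] ℂ) (α : ℝ) (hα : 0 < α)
    (a : (Fin N → ℚ_[p]) → ℝ) (ha_cont : Continuous a)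
    (ha_nonneg : ∀ ξ, 0 ≤ a ξ)
    (C₀ C₁ : ℝ) (m₀ : ℕ)
    (ha_bound : ∀ ξ : Fin N → ℚ_[p], (p : ℝ) ^ (m₀ : ℤ) ≤ ‖ξ‖ →
      C₀ * ‖ξ‖ ^ α ≤ a ξ ∧ a ξ ≤ C₁ * ‖ξ‖ ^ α)
    (l : ℕ) :
    ∃ C₂ : ℝ≥0∞, 0 < C₂ ∧ C₂ < ⊤ ∧
      ∀ g gh : (Fin N → ℚ_[p]) → ℂ, IsFTOf μ B χ g gh →
        sobolevNorm μ α l (fun ξ => (a ξ : ℂ) * gh ξ) ≤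
          C₂ * sobolevNorm μ α (l + 1) gh := by
  obtain ⟨K, hK⟩ := exists_le_mul_max_one_rpow ha_cont hα.le fun ξ hξ => (ha_bound ξ hξ).2
  have hsymbol : ∀ ξ, ‖(a ξ : ℂ)‖ ≤ (K + 1 : ℝ≥0) * max 1 ‖ξ‖ ^ α := fun ξ => by
    rw [Complex.norm_real, Real.norm_of_nonneg (ha_nonneg ξ)]
    exact (hK ξ).trans (by gcongr; simp)
  exact ⟨(K + 1 : ℝ≥0), by positivity, ENNReal.coe_lt_top,
    fun _ gh _ => sobolevNorm_mul_le μ α l hsymbol gh⟩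

/-- a pseudodifferential operator `A g = F⁻¹(𝔞 · F g)` with a smooth
symbol `𝔞` maps `ℋ(l+1)` continuously into `ℋ(l)`: `‖Ag‖_l ≤ C₂ ‖g‖_{l+1}`.
(On the Fourier side, `A` is multiplication by `𝔞`, so `F(Ag) = 𝔞 · ĝ`.) -/
theorem stmt3 {p N : ℕ} [Fact p.Prime] (hN : 1 ≤ N)
    [MeasurableSpace (Fin N → ℚ_[p])] [BorelSpace (Fin N → ℚ_[p])]
    (μ : Measure (Fin N → ℚ_[p])) [μ.IsAddHaarMeasure]
    (B : (Fin N → ℚ_[p]) →ₗ[ℚ_[p]] (Fin N → ℚ_[p]) →ₗ[ℚ_[p]] ℚ_[p])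
    (hB_symm : ∀ x y, B x y = B y x)
    (hB_nondeg : ∀ x, (∀ y, B x y = 0) → x = 0)
    (χ : AddChar ℚ_[p] ℂ) (hχc : Continuous χ)
    (hχ : ∀ y : ℚ_[p], χ y = 1 ↔ ‖y‖ ≤ 1)
    (α : ℝ) (hα : 0 < α)
    (a : (Fin N → ℚ_[p]) → ℝ) (ha_cont : Continuous a)
    (ha_nonneg : ∀ ξ, 0 ≤ a ξ)
    (C C₀ C₁ : ℝ) (hC : 0 < C) (hC₀ : 0 < C₀) (hC₁ : 0 < C₁) (m₀ : ℕ)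
    (ha_low : ∀ ξ : Fin N → ℚ_[p], C ≤ a ξ)
    (ha_bound : ∀ ξ : Fin N → ℚ_[p], (p : ℝ) ^ (m₀ : ℤ) ≤ ‖ξ‖ →
      C₀ * ‖ξ‖ ^ α ≤ a ξ ∧ a ξ ≤ C₁ * ‖ξ‖ ^ α)
    (l : ℕ) :
    ∃ C₂ : ℝ≥0∞, 0 < C₂ ∧ C₂ < ⊤ ∧
      ∀ g gh : (Fin N → ℚ_[p]) → ℂ, IsFTOf μ B χ g gh →
        sobolevNorm μ α l (fun ξ => (a ξ : ℂ) * gh ξ) ≤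
          C₂ * sobolevNorm μ α (l + 1) gh :=
  stmt3_general μ B χ α hα a ha_cont ha_nonneg C₀ C₁ m₀ ha_bound l

end
end

section
/- Let 𝔩 be an elliptic polynomial of degree d on ℚ_p^N, α > 0 and m > 0. If αd > N, then the function ξ ↦ 1/(|𝔩(ξ)|_p^α + m²) is integrable on ℚ_p^N with respect to Haar measure. -/
/-!
An elliptic form of degree `d` satisfies `|𝔩(ξ)|_p ≥ C ‖ξ‖^d`: by homogeneity it suffices to
bound `|𝔩|` below on a compact shell, where it does not vanish. Hence the integrand is
`O(max(1, ‖ξ‖)^(-αd))`. The ball of radius `p^j` is covered by `p^(jN)` translates of the unit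
ball, so summing over the shells `p^(j-1) < ‖ξ‖ ≤ p^j` bounds the integral of
`max(1, ‖ξ‖)^(-s)` by a geometric series of ratio `p^(N-s)`, which converges for `s > N`.
-/

open MeasureTheory Metric
open scoped ENNReal

namespace MvPolynomial

theorem IsHomogeneous.eval_smul {R σ : Type*} [CommSemiring R] {φ : MvPolynomial σ R} {n : ℕ}
    (hφ : φ.IsHomogeneous n) (c : R) (x : σ → R) :
    eval (c • x) φ = c ^ n * eval x φ := by
  rw [eval_eq, eval_eq, Finset.mul_sum]
  refine Finset.sum_congr rfl fun s hs => ?_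
  have hdeg : ∑ i ∈ s.support, s i = n := by
    rw [← hφ (mem_support_iff.mp hs)]
    simp [Finsupp.weight_apply, Finsupp.sum]
  simp only [Pi.smul_apply, smul_eq_mul, mul_pow, Finset.prod_mul_distrib,
    Finset.prod_pow_eq_pow_sum, hdeg]
  ring

end MvPolynomial

theorem exists_pos_mul_norm_pow_le_norm_of_homogeneous {𝕜 E F : Type*}
    [NontriviallyNormedField 𝕜] [NormedAddCommGroup E] [NormedSpace 𝕜 E] [ProperSpace E]
    [NormedAddCommGroup F] {f : E → F} (hf : Continuous f) {n : ℕ} (hn : 0 < n)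
    (hhom : ∀ (c : 𝕜) x, ‖f (c • x)‖ = ‖c‖ ^ n * ‖f x‖) (hzero : ∀ x, f x = 0 → x = 0) :
    ∃ C > 0, ∀ x, C * ‖x‖ ^ n ≤ ‖f x‖ := by
  obtain ⟨c, hc⟩ := NormedField.exists_one_lt_norm 𝕜
  set K : Set E := {y | ‖c‖⁻¹ ≤ ‖y‖ ∧ ‖y‖ ≤ 1}
  have hK : IsCompact K :=
    (isCompact_closedBall (0 : E) 1).of_isClosed_subset
      ((isClosed_le continuous_const continuous_norm).inter
        (isClosed_le continuous_norm continuous_const))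
      fun y hy => mem_closedBall_zero_iff.mpr hy.2
  have hpos : ∀ y ∈ K, (0 : ℝ) < ‖f y‖ := fun y hy =>
    norm_pos_iff.mpr fun h0 => by
      have := hy.1
      rw [hzero y h0, norm_zero] at this
      exact this.not_gt (inv_pos.mpr (one_pos.trans hc))
  obtain ⟨C, hC, hCK⟩ := hK.exists_forall_le' hf.norm.continuousOn hpos
  refine ⟨C, hC, fun x => ?_⟩
  rcases eq_or_ne x 0 with rfl | hx
  · simp [zero_pow hn.ne']
  obtain ⟨d, -, hdx, hdx', -⟩ := rescale_to_shell hc one_pos hx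
  have hdK : d • x ∈ K := ⟨by simpa using hdx', hdx.le⟩
  rw [norm_smul] at hdx
  calc C * ‖x‖ ^ n ≤ ‖f (d • x)‖ * ‖x‖ ^ n := by gcongr; exact hCK _ hdK
    _ = (‖d‖ * ‖x‖) ^ n * ‖f x‖ := by rw [hhom, mul_pow]; ring
    _ ≤ ‖f x‖ := mul_le_of_le_one_left (norm_nonneg _) (pow_le_one₀ (by positivity) hdx.le)

theorem lintegral_le_tsum_mul_measure_of_le_on_disjointed {X : Type*} [MeasurableSpace X]
    {μ : Measure X} {f : X → ℝ≥0∞} {B : ℕ → Set X} {b : ℕ → ℝ≥0∞} (hB : ⋃ j, B j = Set.univ)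
    (hf : ∀ j, ∀ x ∈ disjointed B j, f x ≤ b j) :
    ∫⁻ x, f x ∂μ ≤ ∑' j, b j * μ (B j) := by
  calc ∫⁻ x, f x ∂μ = ∫⁻ x in ⋃ j, disjointed B j, f x ∂μ := by
        rw [iUnion_disjointed, hB, Measure.restrict_univ]
    _ ≤ ∑' j, ∫⁻ x in disjointed B j, f x ∂μ := lintegral_iUnion_le _ _
    _ ≤ ∑' j, ∫⁻ _ in disjointed B j, b j ∂μ :=
        ENNReal.tsum_le_tsum fun j => setLIntegral_mono measurable_const (hf j)
    _ ≤ ∑' j, b j * μ (B j) := by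
        gcongr with j
        rw [setLIntegral_const]
        gcongr
        exact disjointed_subset _ _

theorem max_one_norm_rpow_neg_le_of_mem_disjointed {E : Type*} [SeminormedAddCommGroup E]
    {q s : ℝ} (hq : 1 ≤ q) (hs : 0 ≤ s) {j : ℕ} {x : E}
    (hx : x ∈ disjointed (fun j => closedBall (0 : E) (q ^ j)) j) :
    max 1 ‖x‖ ^ (-s) ≤ q ^ s * (q ^ (-s)) ^ j := by
  have hq₀ : 0 < q := one_pos.trans_le hq
  cases j with
  | zero =>
    calc max 1 ‖x‖ ^ (-s) ≤ 1 :=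
          Real.rpow_le_one_of_one_le_of_nonpos (le_max_left _ _) (by linarith)
      _ ≤ q ^ s * (q ^ (-s)) ^ 0 := by simpa using Real.one_le_rpow hq hs
  | succ k =>
    have hmono : Monotone fun j : ℕ => closedBall (0 : E) (q ^ j) := fun i j hij =>
      closedBall_subset_closedBall (pow_le_pow_right₀ hq hij)
    rw [hmono.disjointed_add_one] at hx
    have hk : q ^ k < ‖x‖ := by simpa using hx.2
    calc max 1 ‖x‖ ^ (-s) ≤ (q ^ k) ^ (-s) :=
          Real.rpow_le_rpow_of_nonpos (by positivity) (hk.le.trans (le_max_right _ _))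
            (by linarith)
      _ = q ^ s * (q ^ (-s)) ^ (k + 1) := by
          rw [← Real.rpow_pow_comm hq₀.le, pow_succ, mul_comm, mul_assoc, Real.rpow_neg hq₀.le,
            inv_mul_cancel₀ (by positivity), mul_one]

namespace Padic

variable {p : ℕ} [Fact p.Prime]

theorem exists_lt_pow_norm_sub_natCast_mul_le_one (j : ℕ) {x : ℚ_[p]} (hx : ‖x‖ ≤ p ^ j) :
    ∃ a < p ^ j, ‖x - a * (p : ℚ_[p]) ^ (-(j : ℤ))‖ ≤ 1 := by
  have hp₀ : (0 : ℝ) < p := by exact_mod_cast (Fact.out : p.Prime).pos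
  have hp : (p : ℚ_[p]) ≠ 0 := by exact_mod_cast hp₀.ne'
  have hpj : ‖(p : ℚ_[p]) ^ (j : ℤ) * x‖ ≤ 1 := by
    rw [norm_mul, norm_p_zpow, zpow_neg, zpow_natCast]
    exact inv_mul_le_one_of_le₀ hx (by positivity)
  set y : ℤ_[p] := ⟨_, hpj⟩
  refine ⟨y.appr j, y.appr_lt j, ?_⟩
  have happr : ‖y - y.appr j‖ ≤ (p : ℝ) ^ (-(j : ℤ)) :=
    (PadicInt.norm_le_pow_iff_mem_span_pow _ j).mpr (PadicInt.appr_spec j y)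
  have hxy : x - y.appr j * (p : ℚ_[p]) ^ (-(j : ℤ)) =
      (p : ℚ_[p]) ^ (-(j : ℤ)) * ((y - y.appr j : ℤ_[p]) : ℚ_[p]) := by
    push_cast
    rw [show (y : ℚ_[p]) = (p : ℚ_[p]) ^ (j : ℤ) * x from rfl, mul_sub, ← mul_assoc,
      ← zpow_add₀ hp]
    simp [mul_comm]
  rw [hxy, norm_mul, norm_p_zpow, neg_neg, PadicInt.padic_norm_e_of_padicInt]
  calc (p : ℝ) ^ (j : ℤ) * ‖y - y.appr j‖ ≤ (p : ℝ) ^ (j : ℤ) * (p : ℝ) ^ (-(j : ℤ)) := by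
        gcongr
    _ = 1 := by rw [← zpow_add₀ hp₀.ne']; simp

variable {N : ℕ} [MeasurableSpace (Fin N → ℚ_[p])] [BorelSpace (Fin N → ℚ_[p])]
  (μ : Measure (Fin N → ℚ_[p])) [μ.IsAddHaarMeasure]

theorem measure_closedBall_pow_le (j : ℕ) :
    μ (closedBall 0 ((p : ℝ) ^ j)) ≤ (p : ℝ≥0∞) ^ (j * N) * μ (closedBall 0 1) := by
  set t : (Fin N → Fin (p ^ j)) → Fin N → ℚ_[p] := fun a i => (a i : ℚ_[p]) * p ^ (-(j : ℤ))
  have hcover : closedBall 0 ((p : ℝ) ^ j) ⊆ ⋃ a, closedBall (t a) 1 := by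
    intro ξ hξ
    rw [mem_closedBall_zero_iff, pi_norm_le_iff_of_nonneg (by positivity)] at hξ
    choose a ha hξa using fun i => exists_lt_pow_norm_sub_natCast_mul_le_one j (hξ i)
    refine Set.mem_iUnion.mpr ⟨fun i => ⟨a i, ha i⟩, ?_⟩
    rw [mem_closedBall, dist_eq_norm, pi_norm_le_iff_of_nonneg zero_le_one]
    exact hξa
  calc μ (closedBall 0 ((p : ℝ) ^ j)) ≤ ∑ a, μ (closedBall (t a) 1) :=
        (measure_mono hcover).trans (measure_iUnion_fintype_le _ _)
    _ = (p : ℝ≥0∞) ^ (j * N) * μ (closedBall 0 1) := by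
        simp [Measure.addHaar_closedBall_center, pow_mul]

theorem integrable_max_one_norm_rpow_neg {s : ℝ} (hs : N < s) :
    Integrable (fun ξ : Fin N → ℚ_[p] => max 1 ‖ξ‖ ^ (-s)) μ := by
  have hp : (1 : ℝ) < p := by exact_mod_cast (Fact.out : p.Prime).one_lt
  have hp₀ : (0 : ℝ) < p := zero_lt_one.trans hp
  have hs₀ : 0 < s := (Nat.cast_nonneg N).trans_lt hs
  set B : ℕ → Set (Fin N → ℚ_[p]) := fun j => closedBall 0 ((p : ℝ) ^ j)
  have hBuniv : ⋃ j, B j = Set.univ := Set.eq_univ_of_forall fun ξ =>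
    let ⟨j, hj⟩ := pow_unbounded_of_one_lt ‖ξ‖ hp
    Set.mem_iUnion.mpr ⟨j, mem_closedBall_zero_iff.mpr hj.le⟩
  set r : ℝ≥0∞ := ENNReal.ofReal ((p : ℝ) ^ (-s)) * (p : ℝ≥0∞) ^ N with hr_def
  have hr : r < 1 := by
    rw [hr_def, ← ENNReal.ofReal_natCast, ← ENNReal.ofReal_pow hp₀.le,
      ← ENNReal.ofReal_mul (by positivity), ENNReal.ofReal_lt_one, ← Real.rpow_natCast,
      ← Real.rpow_add hp₀]
    exact Real.rpow_lt_one_of_one_lt_of_neg hp (by linarith)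
  refine ⟨(Continuous.rpow_const (continuous_const.max continuous_norm)
    fun _ => Or.inl (zero_lt_one.trans_le (le_max_left _ _)).ne').aestronglyMeasurable, ?_⟩
  rw [hasFiniteIntegral_iff_ofReal (.of_forall fun ξ => by positivity)]
  calc ∫⁻ ξ, ENNReal.ofReal (max 1 ‖ξ‖ ^ (-s)) ∂μ
      ≤ ∑' j, ENNReal.ofReal ((p : ℝ) ^ s * ((p : ℝ) ^ (-s)) ^ j) * μ (B j) :=
        lintegral_le_tsum_mul_measure_of_le_on_disjointed hBuniv fun _ _ hξ =>
          ENNReal.ofReal_le_ofReal (max_one_norm_rpow_neg_le_of_mem_disjointed hp.le hs₀.le hξ)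
    _ ≤ ∑' j, ENNReal.ofReal ((p : ℝ) ^ s) * μ (closedBall 0 1) * r ^ j := by
        refine ENNReal.tsum_le_tsum fun j => ?_
        calc _ ≤ ENNReal.ofReal ((p : ℝ) ^ s * ((p : ℝ) ^ (-s)) ^ j) *
              ((p : ℝ≥0∞) ^ (j * N) * μ (closedBall 0 1)) := by
              gcongr; exact measure_closedBall_pow_le μ j
          _ = _ := by
              rw [hr_def, ENNReal.ofReal_mul (by positivity), ENNReal.ofReal_pow (by positivity)]
              ring
    _ = ENNReal.ofReal ((p : ℝ) ^ s) * μ (closedBall 0 1) * (1 - r)⁻¹ := by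
        rw [ENNReal.tsum_mul_left, ENNReal.tsum_geometric]
    _ < ⊤ := ENNReal.mul_lt_top (ENNReal.mul_lt_top ENNReal.ofReal_lt_top
        (isCompact_closedBall 0 1).measure_lt_top) (ENNReal.inv_lt_top.mpr (tsub_pos_of_lt hr))

end Padic

theorem inv_rpow_add_le_mul_max_one_rpow_neg {x y C α b : ℝ} {d : ℕ} (hx : 0 ≤ x) (hC : 0 < C)
    (hα : 0 ≤ α) (hb : 0 < b) (hy : C * x ^ d ≤ y) :
    (y ^ α + b)⁻¹ ≤ (min (C ^ α) b)⁻¹ * max 1 x ^ (-(α * d)) := by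
  have hy₀ : 0 ≤ y := (by positivity : 0 ≤ C * x ^ d).trans hy
  have hkey : min (C ^ α) b * max 1 x ^ (α * d) ≤ y ^ α + b := by
    rcases le_total x 1 with hx1 | hx1
    · rw [max_eq_left hx1, Real.one_rpow, mul_one]
      exact (min_le_right _ _).trans (le_add_of_nonneg_left (by positivity))
    · rw [max_eq_right hx1]
      calc min (C ^ α) b * x ^ (α * d) ≤ C ^ α * x ^ (α * d) := by
            gcongr; exact min_le_left _ _
        _ = (C * x ^ d) ^ α := by
            rw [Real.mul_rpow hC.le (by positivity), mul_comm α, Real.rpow_natCast_mul hx]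
        _ ≤ y ^ α + b := le_add_of_le_of_nonneg (by gcongr) hb.le
  rw [Real.rpow_neg (by positivity), ← mul_inv]
  exact inv_anti₀ (by positivity) hkey

theorem stmt6_general {p N : ℕ} [Fact p.Prime]
    [MeasurableSpace (Fin N → ℚ_[p])] [BorelSpace (Fin N → ℚ_[p])]
    (μ : Measure (Fin N → ℚ_[p])) [μ.IsAddHaarMeasure]
    (d : ℕ) (hd : 0 < d)
    (l : MvPolynomial (Fin N) ℚ_[p])
    (hhom : l.IsHomogeneous d)
    (hell : ∀ ξ : Fin N → ℚ_[p], MvPolynomial.eval ξ l = 0 ↔ ξ = 0)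
    (α : ℝ) (hα : 0 < α) (m : ℝ) (hm : 0 < m)
    (hαd : (N : ℝ) < α * d) :
    Integrable (fun ξ : Fin N → ℚ_[p] =>
      (‖MvPolynomial.eval ξ l‖ ^ α + m ^ 2)⁻¹) μ := by
  obtain ⟨C, hC, hCl⟩ := exists_pos_mul_norm_pow_le_norm_of_homogeneous (𝕜 := ℚ_[p])
    (MvPolynomial.continuous_eval l) hd
    (fun c ξ => by rw [hhom.eval_smul, norm_mul, norm_pow]) fun ξ => (hell ξ).mp
  have hden : ∀ ξ : Fin N → ℚ_[p], 0 < ‖MvPolynomial.eval ξ l‖ ^ α + m ^ 2 := fun ξ =>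
    add_pos_of_nonneg_of_pos (by positivity) (by positivity)
  have hcont : Continuous fun ξ : Fin N → ℚ_[p] => (‖MvPolynomial.eval ξ l‖ ^ α + m ^ 2)⁻¹ :=
    (((MvPolynomial.continuous_eval l).norm.rpow_const fun _ => Or.inr hα.le).add
      continuous_const).inv₀ fun ξ => (hden ξ).ne'
  refine ((Padic.integrable_max_one_norm_rpow_neg μ hαd).const_mul
    (min (C ^ α) (m ^ 2))⁻¹).mono'
    hcont.aestronglyMeasurable (.of_forall fun ξ => ?_)
  rw [Real.norm_of_nonneg (inv_nonneg.mpr (hden ξ).le)]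
  exact inv_rpow_add_le_mul_max_one_rpow_neg (norm_nonneg ξ) hC hα.le (by positivity) (hCl ξ)

/-- for an elliptic polynomial `𝔩` of degree `d` on `ℚ_p^N`, `α > 0`, `m > 0`
with `αd > N`, the function `ξ ↦ 1/(|𝔩(ξ)|_p^α + m²)` is integrable with respect to Haar
measure (normalized so that the unit ball has measure 1). -/
theorem stmt6 {p N : ℕ} [Fact p.Prime] (hN : 1 ≤ N)
    [MeasurableSpace (Fin N → ℚ_[p])] [BorelSpace (Fin N → ℚ_[p])]
    (μ : Measure (Fin N → ℚ_[p])) [μ.IsAddHaarMeasure]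
    (hμ : μ {y : Fin N → ℚ_[p] | ‖y‖ ≤ 1} = 1)
    (d : ℕ) (hd : 0 < d)
    (l : MvPolynomial (Fin N) ℚ_[p])
    (hcoeff : ∀ m, ‖MvPolynomial.coeff m l‖ ≤ 1)
    (hhom : l.IsHomogeneous d)
    (hell : ∀ ξ : Fin N → ℚ_[p], MvPolynomial.eval ξ l = 0 ↔ ξ = 0)
    (α : ℝ) (hα : 0 < α) (m : ℝ) (hm : 0 < m)
    (hαd : (N : ℝ) < α * d) :
    Integrable (fun ξ : Fin N → ℚ_[p] =>
      (‖MvPolynomial.eval ξ l‖ ^ α + m ^ 2)⁻¹) μ :=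
  stmt6_general μ d hd l hhom hell α hα m hm hαd
end

section
/- Let 𝔩 be an elliptic polynomial of degree d on ℚ_p^N and m, α > 0. For every g in the weighted Sobolev space ℋ(l) (l ∈ ℕ), the function u defined by û(ξ) = ĝ(ξ)/(|𝔩(ξ)|_p^α + m²) belongs to ℋ(l+d) and satisfies ‖u‖_{l+d} ≤ C' ‖g‖_l for a constant C' independent of g. In particular the Klein–Gordon-type equation (L_α + m²)u = g, with L_α u = F⁻¹(|𝔩|_p^α F u), has a unique solution u ∈ ∩_l ℋ(l) for each g ∈ ∩_l ℋ(l). -/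
/-!
On the Fourier side the solution is obtained by dividing by the symbol `|𝔩(ξ)|_p^α + m²`.
By homogeneity and compactness of the unit sphere, `|𝔩(ξ)|_p ≥ C₀ ‖ξ‖_p^d`, so the symbol
dominates a multiple of `max(1, ‖ξ‖_p)^{αd}`: dividing by it raises the Sobolev index by `d`
at the cost of a constant. Since the symbol is also at least `m²`, the quotient stays in every
`ℋ(l)`, and it is the only solution because the symbol never vanishes.
-/

open MeasureTheory Filter
open scoped ENNReal NNReal

noncomputable section

theorem MvPolynomial.IsHomogeneous.eval_smul_s9 {σ R : Type*} [Fintype σ] [CommSemiring R]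
    {L : MvPolynomial σ R} {d : ℕ} (hL : L.IsHomogeneous d) (c : R) (x : σ → R) :
    MvPolynomial.eval (c • x) L = c ^ d * MvPolynomial.eval x L := by
  rw [MvPolynomial.eval_eq', MvPolynomial.eval_eq', Finset.mul_sum]
  refine Finset.sum_congr rfl fun s hs => ?_
  have hdeg : ∑ i, s i = d := by
    rw [← Finsupp.degree_eq_sum, Finsupp.degree_eq_weight_one]
    exact hL (MvPolynomial.mem_support_iff.mp hs)
  simp_rw [Pi.smul_apply, smul_eq_mul, mul_pow, Finset.prod_mul_distrib,
    Finset.prod_pow_eq_pow_sum, hdeg]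
  ring

theorem Pi.exists_norm_eq_norm_apply {ι E : Type*} [Fintype ι] [Nonempty ι]
    [SeminormedAddGroup E] (f : ι → E) : ∃ i, ‖f‖ = ‖f i‖ := by
  obtain ⟨i, -, hi⟩ := Finset.univ.exists_mem_eq_sup Finset.univ_nonempty (fun i => ‖f i‖₊)
  exact ⟨i, by rw [Pi.norm_def, hi]; rfl⟩

/-- Homogeneity reduces the bound to the unit sphere, where `‖eval · L‖` attains a positive
minimum by compactness; a vector is rescaled to the sphere by the inverse of a coordinate of
maximal norm. -/
theorem MvPolynomial.IsHomogeneous.exists_mul_norm_pow_le_norm_eval {σ 𝕜 : Type*} [Fintype σ]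
    [NormedField 𝕜] [ProperSpace 𝕜] {L : MvPolynomial σ 𝕜} {d : ℕ} (hL : L.IsHomogeneous d)
    (hzero : ∀ ξ : σ → 𝕜, MvPolynomial.eval ξ L = 0 → ξ = 0) :
    ∃ C₀ : ℝ, 0 < C₀ ∧ ∀ ξ : σ → 𝕜, ξ ≠ 0 → C₀ * ‖ξ‖ ^ d ≤ ‖MvPolynomial.eval ξ L‖ := by
  rcases isEmpty_or_nonempty σ with hσ | hσ
  · exact ⟨1, one_pos, fun ξ hξ => (hξ (Subsingleton.elim ξ 0)).elim⟩
  have h_one_mem : (fun _ => 1 : σ → 𝕜) ∈ Metric.sphere 0 1 := by simp [pi_norm_const]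
  obtain ⟨η, hη, hmin⟩ := (isCompact_sphere (0 : σ → 𝕜) 1).exists_isMinOn ⟨_, h_one_mem⟩
    (MvPolynomial.continuous_eval L).norm.continuousOn
  have hη_ne : η ≠ 0 := ne_zero_of_mem_unit_sphere ⟨η, hη⟩
  refine ⟨‖MvPolynomial.eval η L‖, norm_pos_iff.mpr fun h => hη_ne (hzero η h), fun ξ hξ => ?_⟩
  obtain ⟨i, hi⟩ := Pi.exists_norm_eq_norm_apply ξ
  have hξ_pos : 0 < ‖ξ‖ := norm_pos_iff.mpr hξ
  have hscaled : (ξ i)⁻¹ • ξ ∈ Metric.sphere 0 1 := by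
    rw [mem_sphere_zero_iff_norm, norm_smul, norm_inv, ← hi, inv_mul_cancel₀ hξ_pos.ne']
  have hle : ‖MvPolynomial.eval η L‖ ≤ ‖MvPolynomial.eval ((ξ i)⁻¹ • ξ) L‖ := hmin hscaled
  rw [hL.eval_smul_s9, norm_mul, norm_pow, norm_inv, ← hi, inv_pow,
    ← div_eq_inv_mul, le_div_iff₀ (pow_pos hξ_pos d)] at hle
  exact hle

theorem exists_mul_max_one_rpow_le_rpow_add {E F : Type*} [SeminormedAddGroup E]
    [SeminormedAddGroup F] {f : E → F} {C₀ : ℝ} {d : ℕ} (hC₀ : 0 < C₀)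
    (hf : ∀ ξ, ξ ≠ 0 → C₀ * ‖ξ‖ ^ d ≤ ‖f ξ‖) {α b : ℝ} (hα : 0 < α) (hb : 0 < b) :
    ∃ c : ℝ, 0 < c ∧ ∀ ξ, c * max 1 ‖ξ‖ ^ (α * d) ≤ ‖f ξ‖ ^ α + b := by
  refine ⟨min b (C₀ ^ α), lt_min hb (Real.rpow_pos_of_pos hC₀ α), fun ξ => ?_⟩
  have hfα : 0 ≤ ‖f ξ‖ ^ α := Real.rpow_nonneg (norm_nonneg _) α
  rcases le_or_gt ‖ξ‖ 1 with hξ | hξ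
  · rw [max_eq_left hξ, Real.one_rpow, mul_one]
    linarith [min_le_left b (C₀ ^ α)]
  · have hξ_ne : ξ ≠ 0 := fun h => by rw [h, norm_zero] at hξ; linarith
    have hpow : (C₀ * ‖ξ‖ ^ d) ^ α = C₀ ^ α * ‖ξ‖ ^ (α * d) := by
      rw [Real.mul_rpow hC₀.le (by positivity), ← Real.rpow_natCast, ← Real.rpow_mul
        (norm_nonneg _), mul_comm (d : ℝ)]
    calc min b (C₀ ^ α) * max 1 ‖ξ‖ ^ (α * d)
        ≤ C₀ ^ α * ‖ξ‖ ^ (α * d) := by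
          rw [max_eq_right hξ.le]
          gcongr
          exact min_le_right _ _
      _ = (C₀ * ‖ξ‖ ^ d) ^ α := hpow.symm
      _ ≤ ‖f ξ‖ ^ α := by gcongr; exact hf ξ hξ_ne
      _ ≤ ‖f ξ‖ ^ α + b := le_add_of_nonneg_right hb.le

theorem ENNReal.ofReal_mul_nnnorm_sq {E : Type*} [SeminormedAddGroup E] {t : ℝ} (ht : 0 ≤ t)
    (z : E) : ENNReal.ofReal t * (‖z‖₊ : ℝ≥0∞) ^ 2 = ENNReal.ofReal (t * ‖z‖ ^ 2) := by
  rw [ENNReal.ofReal_mul ht, ENNReal.ofReal_pow (norm_nonneg z), ofReal_norm, enorm_eq_nnnorm]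

theorem sobolevNormSq_div_le {p N : ℕ} [Fact p.Prime] [MeasurableSpace (Fin N → ℚ_[p])]
    (μ : Measure (Fin N → ℚ_[p])) {α : ℝ} (l k : ℤ) {r : (Fin N → ℚ_[p]) → ℝ} {c : ℝ}
    (hc : 0 < c) (hr : ∀ ξ, c * max 1 ‖ξ‖ ^ (α * k) ≤ r ξ) (g : (Fin N → ℚ_[p]) → ℂ) :
    sobolevNormSq μ α (l + k) (fun ξ => g ξ / (r ξ : ℂ)) ≤
      ENNReal.ofReal (c⁻¹ ^ 2) * sobolevNormSq μ α l g := by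
  unfold sobolevNormSq
  rw [← lintegral_const_mul' _ _ ENNReal.ofReal_ne_top]
  refine lintegral_mono fun ξ => ?_
  set M := max 1 ‖ξ‖
  have hM : 0 < M := lt_of_lt_of_le one_pos (le_max_left _ _)
  have hrξ : 0 < r ξ := lt_of_lt_of_le (by positivity) (hr ξ)
  have hweight : M ^ (2 * α * ((l + k : ℤ) : ℝ)) = M ^ (2 * α * l) * (M ^ (α * k)) ^ 2 := by
    rw [sq, ← Real.rpow_add hM, ← Real.rpow_add hM]
    push_cast
    ring_nf
  have hquot : M ^ (α * k) * ‖g ξ / r ξ‖ ≤ c⁻¹ * ‖g ξ‖ := by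
    rw [norm_div, Complex.norm_real, Real.norm_of_nonneg hrξ.le, mul_div_assoc',
      div_le_iff₀ hrξ]
    calc M ^ (α * k) * ‖g ξ‖ = c⁻¹ * (c * M ^ (α * k)) * ‖g ξ‖ := by field_simp
      _ ≤ c⁻¹ * r ξ * ‖g ξ‖ := by gcongr; exact hr ξ
      _ = c⁻¹ * ‖g ξ‖ * r ξ := by ring
  rw [ENNReal.ofReal_mul_nnnorm_sq (by positivity), ENNReal.ofReal_mul_nnnorm_sq (by positivity),
    ← ENNReal.ofReal_mul (by positivity)]
  refine ENNReal.ofReal_le_ofReal ?_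
  calc M ^ (2 * α * ((l + k : ℤ) : ℝ)) * ‖g ξ / r ξ‖ ^ 2
      = M ^ (2 * α * l) * (M ^ (α * k) * ‖g ξ / r ξ‖) ^ 2 := by rw [hweight]; ring
    _ ≤ M ^ (2 * α * l) * (c⁻¹ * ‖g ξ‖) ^ 2 := by gcongr
    _ = c⁻¹ ^ 2 * (M ^ (2 * α * l) * ‖g ξ‖ ^ 2) := by ring

theorem sobolevNorm_div_le {p N : ℕ} [Fact p.Prime] [MeasurableSpace (Fin N → ℚ_[p])]
    (μ : Measure (Fin N → ℚ_[p])) {α : ℝ} (l k : ℤ) {r : (Fin N → ℚ_[p]) → ℝ} {c : ℝ}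
    (hc : 0 < c) (hr : ∀ ξ, c * max 1 ‖ξ‖ ^ (α * k) ≤ r ξ) (g : (Fin N → ℚ_[p]) → ℂ) :
    sobolevNorm μ α (l + k) (fun ξ => g ξ / (r ξ : ℂ)) ≤
      ENNReal.ofReal c⁻¹ * sobolevNorm μ α l g := by
  have hsqrt : ENNReal.ofReal (c⁻¹ ^ 2) ^ (1 / 2 : ℝ) = ENNReal.ofReal c⁻¹ := by
    rw [ENNReal.ofReal_pow (by positivity), ← ENNReal.rpow_natCast, ← ENNReal.rpow_mul]
    norm_num
  unfold sobolevNorm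
  calc sobolevNormSq μ α (l + k) (fun ξ => g ξ / (r ξ : ℂ)) ^ (1 / 2 : ℝ)
      ≤ (ENNReal.ofReal (c⁻¹ ^ 2) * sobolevNormSq μ α l g) ^ (1 / 2 : ℝ) := by
        gcongr
        exact sobolevNormSq_div_le μ l k hc hr g
    _ = ENNReal.ofReal c⁻¹ * sobolevNormSq μ α l g ^ (1 / 2 : ℝ) := by
        rw [ENNReal.mul_rpow_of_nonneg _ _ (by norm_num), hsqrt]

theorem stmt9_general {p N : ℕ} [Fact p.Prime]
    [MeasurableSpace (Fin N → ℚ_[p])]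
    (μ : Measure (Fin N → ℚ_[p]))
    (d : ℕ)
    (L : MvPolynomial (Fin N) ℚ_[p])
    (hhom : L.IsHomogeneous d)
    (hell : ∀ ξ : Fin N → ℚ_[p], MvPolynomial.eval ξ L = 0 ↔ ξ = 0)
    (α : ℝ) (hα : 0 < α) (m : ℝ) (hm : 0 < m) :
    ∃ C' : ℝ≥0∞, 0 < C' ∧ C' < ⊤ ∧
      (∀ (l : ℕ) (gh : (Fin N → ℚ_[p]) → ℂ),
        sobolevNorm μ α (l + d)
            (fun ξ => gh ξ / ((‖MvPolynomial.eval ξ L‖ ^ α + m ^ 2 : ℝ) : ℂ)) ≤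
          C' * sobolevNorm μ α l gh) ∧
      (∀ gh : (Fin N → ℚ_[p]) → ℂ, (∀ l : ℕ, sobolevNormSq μ α l gh < ⊤) →
        ∃! uh : (Fin N → ℚ_[p]) → ℂ,
          (∀ ξ, ((‖MvPolynomial.eval ξ L‖ ^ α + m ^ 2 : ℝ) : ℂ) * uh ξ = gh ξ) ∧
          (∀ l : ℕ, sobolevNormSq μ α l uh < ⊤)) := by
  obtain ⟨C₀, hC₀, hlower⟩ := hhom.exists_mul_norm_pow_le_norm_eval fun ξ => (hell ξ).mp
  obtain ⟨c, hc, hsymbol⟩ := exists_mul_max_one_rpow_le_rpow_add hC₀ hlower hα (pow_pos hm 2)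
  have hsymbol_ne : ∀ ξ, ((‖MvPolynomial.eval ξ L‖ ^ α + m ^ 2 : ℝ) : ℂ) ≠ 0 := fun ξ =>
    Complex.ofReal_ne_zero.mpr (by positivity)
  have hsymbol_ge_sq : ∀ ξ : Fin N → ℚ_[p],
      m ^ 2 * max 1 ‖ξ‖ ^ (α * ((0 : ℤ) : ℝ)) ≤ ‖MvPolynomial.eval ξ L‖ ^ α + m ^ 2 := fun ξ => by
    simpa using Real.rpow_nonneg (norm_nonneg (MvPolynomial.eval ξ L)) α
  refine ⟨ENNReal.ofReal c⁻¹, by simpa using hc, ENNReal.ofReal_lt_top,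
    fun l g => sobolevNorm_div_le μ l d hc (by simpa using hsymbol) g, fun g hg => ?_⟩
  refine ⟨fun ξ => g ξ / ((‖MvPolynomial.eval ξ L‖ ^ α + m ^ 2 : ℝ) : ℂ),
    ⟨fun ξ => mul_div_cancel₀ _ (hsymbol_ne ξ), fun l => ?_⟩,
    fun u hu => funext fun ξ => eq_div_of_mul_eq (hsymbol_ne ξ) ((mul_comm _ _).trans (hu.1 ξ))⟩
  have hbound := sobolevNormSq_div_le μ l 0 (pow_pos hm 2) hsymbol_ge_sq g
  rw [add_zero] at hbound
  exact hbound.trans_lt (ENNReal.mul_lt_top ENNReal.ofReal_lt_top (hg l))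

/-- for an elliptic polynomial `𝔩` of degree `d` and `m, α > 0`: for every
`g ∈ ℋ(l)` the function `u` with `û(ξ) = ĝ(ξ)/(|𝔩(ξ)|_p^α + m²)` belongs to `ℋ(l+d)` with
`‖u‖_{l+d} ≤ C'‖g‖_l`, and for `g ∈ ∩ℋ(l)` the equation `(L_α + m²)u = g` has a unique
solution `u ∈ ∩ℋ(l)` (expressed on the Fourier side: `(|𝔩|_p^α + m²)·û = ĝ`). -/
theorem stmt9 {p N : ℕ} [Fact p.Prime] (hN : 1 ≤ N)
    [MeasurableSpace (Fin N → ℚ_[p])] [BorelSpace (Fin N → ℚ_[p])]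
    (μ : Measure (Fin N → ℚ_[p])) [μ.IsAddHaarMeasure]
    (d : ℕ) (hd : 0 < d)
    (L : MvPolynomial (Fin N) ℚ_[p])
    (hcoeff : ∀ m, ‖MvPolynomial.coeff m L‖ ≤ 1)
    (hhom : L.IsHomogeneous d)
    (hell : ∀ ξ : Fin N → ℚ_[p], MvPolynomial.eval ξ L = 0 ↔ ξ = 0)
    (α : ℝ) (hα : 0 < α) (m : ℝ) (hm : 0 < m) :
    ∃ C' : ℝ≥0∞, 0 < C' ∧ C' < ⊤ ∧
      (∀ (l : ℕ) (gh : (Fin N → ℚ_[p]) → ℂ),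
        sobolevNorm μ α (l + d)
            (fun ξ => gh ξ / ((‖MvPolynomial.eval ξ L‖ ^ α + m ^ 2 : ℝ) : ℂ)) ≤
          C' * sobolevNorm μ α l gh) ∧
      (∀ gh : (Fin N → ℚ_[p]) → ℂ, (∀ l : ℕ, sobolevNormSq μ α l gh < ⊤) →
        ∃! uh : (Fin N → ℚ_[p]) → ℂ,
          (∀ ξ, ((‖MvPolynomial.eval ξ L‖ ^ α + m ^ 2 : ℝ) : ℂ) * uh ξ = gh ξ) ∧
          (∀ l : ℕ, sobolevNormSq μ α l uh < ⊤)) :=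
  stmt9_general μ d L hhom hell α hα m hm

end
end
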